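/- arXiv:2308.16332 — 4 statements merged into one kernel-verified Lean document; each statement's English description precedes it below -/
import Mathlib

section
/- In the right-merging model problem with upwind flux, all coefficients in the one-step update U_0^{n+1} = (λ/V̂_0) U_{-1}^n + ((α − λ w_{1,1})/V̂_0) U_0^n + ((1−λ)(1−w_{1,1})/V̂_0) U_1^n, U_1^{n+1} = (1−w_{1,1})(λ/V̂_0) U_{-1}^n + (1−(1−λ)w_{1,1})(α/V̂_0) U_0^n + ((1−λ)(1−w_{1,1}(1−α))/V̂_0) U_1^n, where V̂_0 = α + 1 − w_{1,1}, are nonnegative provided 0 ≤ λ ≤ 1, 0 < α < 1/2, and 0 ≤ w_{1,1} ≤ α. -/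
theorem stmt_1 (α lam w11 : ℝ) (hlam0 : 0 ≤ lam) (hlam1 : lam ≤ 1)
    (hα0 : 0 < α) (hα1 : α < 1/2) (hw0 : 0 ≤ w11) (hw1 : w11 ≤ α) :
    let V0 : ℝ := α + 1 - w11
    0 ≤ lam / V0 ∧ 0 ≤ (α - lam * w11) / V0 ∧ 0 ≤ (1 - lam) * (1 - w11) / V0 ∧
    0 ≤ (1 - w11) * (lam / V0) ∧ 0 ≤ (1 - (1 - lam) * w11) * (α / V0) ∧
    0 ≤ (1 - lam) * (1 - w11 * (1 - α)) / V0 := by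
  intro V0
  have hV : 0 < V0 := by simp only [V0]; nlinarith
  have hw1' : w11 ≤ 1 := by linarith
  refine ⟨div_nonneg hlam0 hV.le, div_nonneg (by nlinarith) hV.le,
    div_nonneg (by nlinarith) hV.le,
    mul_nonneg (by linarith) (div_nonneg hlam0 hV.le),
    mul_nonneg (by nlinarith) (div_nonneg hα0.le hV.le),
    div_nonneg (mul_nonneg (by linarith) (by nlinarith [mul_nonneg hw0 hα0.le])) hV.le⟩
end

section
/- The general weighted SRD scheme is conservative: if U_i^n = Σ_{j∈W_i} w_{i,j} Q̂_j^{n−1} with Σ_{j∈W_i} w_{i,j} = 1 for every cell i, and Q̂_j^{n−1} = (1/V̂_j) Σ_{i∈M_j} w_{i,j} V_i Û_i^{n−1} with V̂_j = Σ_{i∈M_j} w_{i,j} V_i, where membership i ∈ M_j is equivalent to j ∈ W_i, then Σ_i V_i U_i^n = Σ_i V_i Û_i^{n−1}. -/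
/-!
Both sides equal the total merged mass `∑ j, V̂ j * Q̂ j`. Exchanging the sums over the incidence
relation `j ∈ W i`, the weighted volumes `w i j * V i` summed over `M j` give `V̂ j` on one side,
while on the other the weights summing to one over `W i` recover `V i * Û i`.
-/

open Finset in
theorem Finset.sum_sum_mem_comm {α β M : Type*} [Fintype α] [Fintype β] [DecidableEq β]
    [AddCommMonoid M] (W : α → Finset β) (f : α → β → M) :
    ∑ i, ∑ j ∈ W i, f i j = ∑ j, ∑ i ∈ univ.filter (fun i => j ∈ W i), f i j :=
  sum_comm' fun i j => by simp

open Finset in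
theorem stmt_4 {ι : Type*} [Fintype ι] [DecidableEq ι]
    (V : ι → ℝ) (w : ι → ι → ℝ) (W : ι → Finset ι)
    (U Uhat Q Vhat : ι → ℝ)
    (hVhat : ∀ j, Vhat j = ∑ i ∈ univ.filter (fun i => j ∈ W i), w i j * V i)
    (hVhatpos : ∀ j, 0 < Vhat j)
    (hQ : ∀ j, Q j = (1 / Vhat j) * ∑ i ∈ univ.filter (fun i => j ∈ W i), w i j * V i * Uhat i)
    (hU : ∀ i, U i = ∑ j ∈ W i, w i j * Q j)
    (hsum : ∀ i, ∑ j ∈ W i, w i j = 1) :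
    ∑ i, V i * U i = ∑ i, V i * Uhat i := by
  have hmass : ∀ j, Vhat j * Q j = ∑ i ∈ univ.filter (fun i => j ∈ W i), w i j * V i * Uhat i :=
    fun j => by rw [hQ, ← mul_assoc, mul_one_div_cancel (hVhatpos j).ne', one_mul]
  calc ∑ i, V i * U i = ∑ i, ∑ j ∈ W i, w i j * V i * Q j := by
        refine sum_congr rfl fun i _ => ?_
        rw [hU, mul_sum]
        exact sum_congr rfl fun j _ => by ring
    _ = ∑ j, Vhat j * Q j := by
        rw [sum_sum_mem_comm]
        simp only [hVhat, sum_mul]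
    _ = ∑ j, ∑ i ∈ univ.filter (fun i => j ∈ W i), w i j * V i * Uhat i :=
        sum_congr rfl fun j _ => hmass j
    _ = ∑ i, (∑ j ∈ W i, w i j) * (V i * Uhat i) := by
        rw [← sum_sum_mem_comm]
        simp only [sum_mul, mul_assoc]
    _ = ∑ i, V i * Uhat i := by simp only [hsum, one_mul]
end

section
/- In configuration 2 of normal merging, with s = 1 − l_{14} and 0 < s ≤ 1, 0 < l_{02} ≤ 1, the quantity α_1 − λ_1 = 1 − s²/(2(l_{02}+s)) − (1+l_{02})/(1+l_{02}+s) is nonnegative. -/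
theorem stmt_9 (s l02 : ℝ) (hs0 : 0 < s) (hs1 : s ≤ 1) (hl0 : 0 < l02) (hl1 : l02 ≤ 1) :
    0 ≤ 1 - s^2 / (2 * (l02 + s)) - (1 + l02) / (1 + l02 + s) := by
  have h1 : 0 < l02 + s := by linarith
  have h2 : 0 < 1 + l02 + s := by linarith
  have : 1 - s^2 / (2 * (l02 + s)) - (1 + l02) / (1 + l02 + s)
        = (2*(l02+s)*(1+l02+s) - s^2*(1+l02+s) - (1+l02)*2*(l02+s)) / (2*(l02+s)*(1+l02+s)) := by
      field_simp
  rw [this]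
  apply div_nonneg _ (by positivity)
  nlinarith [sq_nonneg s, sq_nonneg (1-s), mul_pos hl0 hs0]
end

section
/- For an unmerged large cut cell with edge fractions l_{02} ≥ l_{03}, l_{02}+l_{03} ≥ 1, and any CFL number λ ∈ (0, 1], the quantity α_0 − λ_0 = (l_{02}+l_{03})/2 − l_{02} λ/(1 + l_{02} − l_{03}) is nonnegative. -/
theorem stmt_12 (l02 l03 lam : ℝ) (h0 : 0 ≤ l03) (h1 : l03 ≤ l02) (h2 : l02 ≤ 1)
    (h3 : 1 ≤ l02 + l03) (hl0 : 0 < lam) (hl1 : lam ≤ 1) :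
    0 ≤ (l02 + l03) / 2 - l02 * lam / (1 + l02 - l03) := by
  have hd : 0 < 1 + l02 - l03 := by linarith
  rw [sub_nonneg, div_le_div_iff₀ hd (by norm_num : (0:ℝ) < 2)]
  nlinarith [mul_nonneg (sub_nonneg.2 h1) (sub_nonneg.2 h3),
    mul_le_of_le_one_right (by linarith : (0:ℝ) ≤ l02) hl1]
end
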